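/- Let S be the subgroup of U(2,1;O₁₁) consisting of matrices fixing q∞, and let S̄ = S/{±I} (the stabiliser of q∞ in PU(2,1;O₁₁)). Let P be the group given by the presentation with generators r₁, r₂, r₃, t and relators r₁², t r₁ t⁻¹ r₁⁻¹, t r₂⁻², t r₃⁻², t (r₁ r₃ r₂)⁻². Then the assignment r₁ ↦ [R₁], r₂ ↦ [R₂], r₃ ↦ [R₃], t ↦ [T] (classes modulo {±I}) extends to a group isomorphism from P onto S̄. -/

import Mathlib

open Matrix Complex

noncomputable section

def Jmat : Matrix (Fin 3) (Fin 3) ℂ := !![0,0,1; 0,1,0; 1,0,0]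

lemma Jmat_mul_Jmat : Jmat * Jmat = 1 := by
  simp [Jmat, Matrix.mul_fin_three, Matrix.one_fin_three]

lemma Jmat_conjTranspose : Jmatᴴ = Jmat := by
  ext i j
  fin_cases i <;> fin_cases j <;>
    simp [Jmat, Matrix.conjTranspose_apply, Matrix.vecHead, Matrix.vecTail]

/-- `ω₁₁ = (1 + i√11)/2`. -/
def ω : ℂ := (1 + Complex.I * (√11 : ℝ)) / 2

/-- The ring of integers `O₁₁ = ℤ[ω₁₁]` of `ℚ(√-11)`, as a subset of `ℂ`. -/
def O11 : Set ℂ := {z | ∃ a b : ℤ, z = (a : ℂ) + (b : ℂ) * ω}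

lemma O11.zero : (0:ℂ) ∈ O11 := ⟨0, 0, by simp⟩
lemma O11.one : (1:ℂ) ∈ O11 := ⟨1, 0, by simp⟩
lemma O11.add {x y : ℂ} (hx : x ∈ O11) (hy : y ∈ O11) : x + y ∈ O11 := by
  obtain ⟨a,b,rfl⟩ := hx; obtain ⟨c,e,rfl⟩ := hy
  exact ⟨a+c, b+e, by push_cast; ring⟩
lemma O11.neg {x : ℂ} (hx : x ∈ O11) : -x ∈ O11 := by
  obtain ⟨a,b,rfl⟩ := hx
  exact ⟨-a, -b, by push_cast; ring⟩
lemma sqrt11_sq : ((√11:ℝ):ℂ) * ((√11:ℝ):ℂ) = 11 := by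
  rw [← Complex.ofReal_mul]; norm_num [Real.mul_self_sqrt]
lemma hω : ω * ω = ω - 3 := by
  rw [ω]
  linear_combination (((√11:ℝ):ℂ)^2/4) * Complex.I_mul_I + (-1/4 : ℂ) * sqrt11_sq
lemma O11.mul {x y : ℂ} (hx : x ∈ O11) (hy : y ∈ O11) : x * y ∈ O11 := by
  obtain ⟨a,b,rfl⟩ := hx; obtain ⟨c,e,rfl⟩ := hy
  refine ⟨a*c - 3*(b*e), a*e + b*c + b*e, ?_⟩
  push_cast
  linear_combination ((b:ℂ) * (e:ℂ)) * hω
lemma hconjω : (starRingEnd ℂ) ω = 1 - ω := by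
  rw [ω, map_div₀, map_add, _root_.map_one, _root_.map_mul, Complex.conj_I, Complex.conj_ofReal, map_ofNat]
  ring
lemma O11.star {x : ℂ} (hx : x ∈ O11) : (starRingEnd ℂ) x ∈ O11 := by
  obtain ⟨a,b,rfl⟩ := hx
  refine ⟨a + b, -b, ?_⟩
  rw [map_add, _root_.map_mul, map_intCast, map_intCast, hconjω]
  push_cast
  ring

/-- Entries of a matrix all lie in `O₁₁`. -/
def EntriesIn (M : Matrix (Fin 3) (Fin 3) ℂ) : Prop := ∀ i j, M i j ∈ O11

lemma EntriesIn.mul {A B : Matrix (Fin 3) (Fin 3) ℂ}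
    (hA : EntriesIn A) (hB : EntriesIn B) : EntriesIn (A * B) := by
  intro i j
  rw [Matrix.mul_apply, Fin.sum_univ_three]
  exact O11.add (O11.add (O11.mul (hA _ _) (hB _ _)) (O11.mul (hA _ _) (hB _ _)))
    (O11.mul (hA _ _) (hB _ _))

lemma EntriesIn.one : EntriesIn 1 := by
  intro i j
  by_cases h : i = j
  · simp [Matrix.one_apply, h]; exact O11.one
  · simp [Matrix.one_apply, h]; exact O11.zero

lemma EntriesIn.conjTranspose {A : Matrix (Fin 3) (Fin 3) ℂ}
    (hA : EntriesIn A) : EntriesIn Aᴴ := fun i j => O11.star (hA j i)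

lemma EntriesIn.Jmat : EntriesIn Jmat := by
  intro i j
  fin_cases i <;> fin_cases j <;>
    simp [Jmat, Matrix.vecHead, Matrix.vecTail] <;>
    first
      | exact O11.one
      | exact O11.zero

/-- `M` preserves the Hermitian form. -/
def IsU (M : Matrix (Fin 3) (Fin 3) ℂ) : Prop := Mᴴ * Jmat * M = Jmat

lemma IsU.mul {A B : Matrix (Fin 3) (Fin 3) ℂ} (hA : IsU A) (hB : IsU B) :
    IsU (A * B) := by
  unfold IsU at *
  rw [Matrix.conjTranspose_mul]
  calc Bᴴ * Aᴴ * Jmat * (A * B) = Bᴴ * (Aᴴ * Jmat * A) * B := by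
        simp only [Matrix.mul_assoc]
  _ = Bᴴ * Jmat * B := by rw [hA]
  _ = Jmat := hB

lemma IsU.one : IsU 1 := by simp [IsU]

/-- `M` fixes the point `q∞`, i.e. the line through `(1,0,0)ᵗ`. -/
def FixesQInf (M : Matrix (Fin 3) (Fin 3) ℂ) : Prop :=
  ∃ c : ℂ, M.mulVec ![1,0,0] = c • ![1,0,0]

lemma FixesQInf.mul {A B : Matrix (Fin 3) (Fin 3) ℂ}
    (hA : FixesQInf A) (hB : FixesQInf B) : FixesQInf (A * B) := by
  obtain ⟨c, hc⟩ := hA; obtain ⟨e, he⟩ := hB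
  refine ⟨c * e, ?_⟩
  rw [← Matrix.mulVec_mulVec, he, Matrix.mulVec_smul, hc, smul_smul, mul_comm]

lemma FixesQInf.one : FixesQInf 1 := ⟨1, by simp⟩

/-- For `U ∈ GL(3,ℂ)` satisfying the unitarity condition, the matrix of `U⁻¹` is
`J Uᴴ J`. -/
lemma inv_coe_eq {U : GL (Fin 3) ℂ} (hU : IsU (U : Matrix (Fin 3) (Fin 3) ℂ)) :
    ((U⁻¹ : GL (Fin 3) ℂ) : Matrix (Fin 3) (Fin 3) ℂ)
      = Jmat * (U : Matrix (Fin 3) (Fin 3) ℂ)ᴴ * Jmat := by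
  have h : (Jmat * (U : Matrix (Fin 3) (Fin 3) ℂ)ᴴ * Jmat) * U = 1 := by
    calc (Jmat * (↑U)ᴴ * Jmat) * (U : Matrix (Fin 3) (Fin 3) ℂ)
        = Jmat * ((↑U)ᴴ * Jmat * ↑U) := by simp only [Matrix.mul_assoc]
    _ = 1 := by rw [hU, Jmat_mul_Jmat]
  exact Units.inv_eq_of_mul_eq_one_right (mul_eq_one_comm.mp h)

lemma IsU.inv {U : GL (Fin 3) ℂ} (hU : IsU (U : Matrix (Fin 3) (Fin 3) ℂ)) :
    IsU ((U⁻¹ : GL (Fin 3) ℂ) : Matrix (Fin 3) (Fin 3) ℂ) := by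
  rw [inv_coe_eq hU]
  unfold IsU at *
  set M : Matrix (Fin 3) (Fin 3) ℂ := (U : Matrix (Fin 3) (Fin 3) ℂ) with hM
  have h2 : M * (Jmat * Mᴴ * Jmat) = 1 := by
    apply mul_eq_one_comm.mp
    calc (Jmat * Mᴴ * Jmat) * M = Jmat * (Mᴴ * Jmat * M) := by
          simp only [Matrix.mul_assoc]
    _ = 1 := by rw [hU, Jmat_mul_Jmat]
  have h3 : M * Jmat * Mᴴ = Jmat := by
    calc M * Jmat * Mᴴ = M * Jmat * Mᴴ * (Jmat * Jmat) := by
          rw [Jmat_mul_Jmat, Matrix.mul_one]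
    _ = M * (Jmat * Mᴴ * Jmat) * Jmat := by simp only [Matrix.mul_assoc]
    _ = Jmat := by rw [h2, Matrix.one_mul]
  have hH : (Jmat * Mᴴ * Jmat)ᴴ = Jmat * M * Jmat := by
    rw [Matrix.conjTranspose_mul, Matrix.conjTranspose_mul, Jmat_conjTranspose,
      Matrix.conjTranspose_conjTranspose]
    simp only [Matrix.mul_assoc]
  rw [hH]
  calc Jmat * M * Jmat * Jmat * (Jmat * Mᴴ * Jmat)
      = Jmat * M * (Jmat * Jmat) * Jmat * Mᴴ * Jmat := by simp only [Matrix.mul_assoc]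
  _ = Jmat * M * Jmat * Mᴴ * Jmat := by rw [Jmat_mul_Jmat, Matrix.mul_one]
  _ = Jmat * (M * Jmat * Mᴴ) * Jmat := by simp only [Matrix.mul_assoc]
  _ = Jmat * Jmat * Jmat := by rw [h3]
  _ = Jmat := by rw [Jmat_mul_Jmat, Matrix.one_mul]

lemma EntriesIn.inv {U : GL (Fin 3) ℂ} (hU : IsU (U : Matrix (Fin 3) (Fin 3) ℂ))
    (hE : EntriesIn (U : Matrix (Fin 3) (Fin 3) ℂ)) :
    EntriesIn ((U⁻¹ : GL (Fin 3) ℂ) : Matrix (Fin 3) (Fin 3) ℂ) := by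
  rw [inv_coe_eq hU]
  exact (EntriesIn.Jmat.mul hE.conjTranspose).mul EntriesIn.Jmat

lemma FixesQInf.inv {U : GL (Fin 3) ℂ}
    (hF : FixesQInf (U : Matrix (Fin 3) (Fin 3) ℂ)) :
    FixesQInf ((U⁻¹ : GL (Fin 3) ℂ) : Matrix (Fin 3) (Fin 3) ℂ) := by
  obtain ⟨c, hc⟩ := hF
  have hUU : ((U⁻¹ : GL (Fin 3) ℂ) : Matrix (Fin 3) (Fin 3) ℂ) *
      (U : Matrix (Fin 3) (Fin 3) ℂ) = 1 := by
    rw [← Units.val_mul, inv_mul_cancel, Units.val_one]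
  have h1 : (![1,0,0] : Fin 3 → ℂ) =
      c • ((U⁻¹ : GL (Fin 3) ℂ) : Matrix (Fin 3) (Fin 3) ℂ).mulVec ![1,0,0] := by
    calc (![1,0,0] : Fin 3 → ℂ)
        = (((U⁻¹ : GL (Fin 3) ℂ) : Matrix (Fin 3) (Fin 3) ℂ) *
            (U : Matrix (Fin 3) (Fin 3) ℂ)).mulVec ![1,0,0] := by
          rw [hUU, Matrix.one_mulVec]
    _ = ((U⁻¹ : GL (Fin 3) ℂ) : Matrix (Fin 3) (Fin 3) ℂ).mulVec
          ((U : Matrix (Fin 3) (Fin 3) ℂ).mulVec ![1,0,0]) := by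
          rw [Matrix.mulVec_mulVec]
    _ = c • ((U⁻¹ : GL (Fin 3) ℂ) : Matrix (Fin 3) (Fin 3) ℂ).mulVec ![1,0,0] := by
          rw [hc, Matrix.mulVec_smul]
  have hc0 : c ≠ 0 := by
    intro h0
    rw [h0, zero_smul] at h1
    have := congrFun h1 0
    simp at this
  refine ⟨c⁻¹, ?_⟩
  conv_rhs => rw [h1]
  rw [smul_smul, inv_mul_cancel₀ hc0, one_smul]

/-- The stabiliser of `q∞` in `U(2,1;O₁₁)`, as a subgroup of `GL(3,ℂ)`. -/
def stab : Subgroup (GL (Fin 3) ℂ) where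
  carrier := {U | EntriesIn (U : Matrix (Fin 3) (Fin 3) ℂ) ∧
    IsU (U : Matrix (Fin 3) (Fin 3) ℂ) ∧ FixesQInf (U : Matrix (Fin 3) (Fin 3) ℂ)}
  mul_mem' := by
    rintro A B ⟨hAe, hAu, hAf⟩ ⟨hBe, hBu, hBf⟩
    exact ⟨by rw [Units.val_mul]; exact hAe.mul hBe,
      by rw [Units.val_mul]; exact hAu.mul hBu,
      by rw [Units.val_mul]; exact hAf.mul hBf⟩
  one_mem' := by
    refine ⟨?_, ?_, ?_⟩ <;> rw [Units.val_one]
    · exact EntriesIn.one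
    · exact IsU.one
    · exact FixesQInf.one
  inv_mem' := by
    rintro U ⟨hUe, hUu, hUf⟩
    exact ⟨hUe.inv hUu, hUu.inv, hUf.inv⟩

lemma negOne_mem : (-1 : GL (Fin 3) ℂ) ∈ stab := by
  refine ⟨?_, ?_, ?_⟩ <;> rw [Units.val_neg, Units.val_one]
  · intro i j
    by_cases h : i = j
    · simp [Matrix.one_apply, h]; exact O11.neg O11.one
    · simp [Matrix.one_apply, h]; exact O11.zero
  · simp [IsU]
  · exact ⟨-1, by simp [Matrix.neg_mulVec]⟩

/-- `−I` as an element of the stabiliser. -/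
def negOne : stab := ⟨-1, negOne_mem⟩

lemma negOne_central (g : stab) : g * negOne = negOne * g := by
  apply Subtype.ext
  show (g : GL (Fin 3) ℂ) * (-1) = (-1) * (g : GL (Fin 3) ℂ)
  rw [mul_neg_one, neg_one_mul]

instance zpowers_negOne_normal : (Subgroup.zpowers negOne).Normal := by
  constructor
  intro n hn g
  obtain ⟨k, rfl⟩ := hn
  have hcomm : Commute negOne g := negOne_central g |>.symm
  have : g * negOne ^ k * g⁻¹ = negOne ^ k := by
    rw [← (hcomm.zpow_left k).eq, mul_assoc, mul_inv_cancel, mul_one]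
  rw [this]
  exact Subgroup.zpow_mem _ (Subgroup.mem_zpowers negOne) k

def R₁ : Matrix (Fin 3) (Fin 3) ℂ := !![1,0,0; 0,-1,0; 0,0,1]
def R₂ : Matrix (Fin 3) (Fin 3) ℂ := !![1, 1, -((starRingEnd ℂ) ω); 0,-1,1; 0,0,1]
def R₃ : Matrix (Fin 3) (Fin 3) ℂ :=
  !![1, (starRingEnd ℂ) ω, -1 - (starRingEnd ℂ) ω; 0, -1, ω; 0,0,1]
def T : Matrix (Fin 3) (Fin 3) ℂ := !![1, 0, Complex.I*(√11:ℝ); 0,1,0; 0,0,1]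

lemma hR₁ : R₁ᴴ * Jmat * R₁ = Jmat := by
  ext i j
  fin_cases i <;> fin_cases j <;>
    simp [Matrix.mul_apply, Fin.sum_univ_three, Jmat, R₁, Matrix.conjTranspose_apply,
      Matrix.vecHead, Matrix.vecTail]

lemma hR₂ : R₂ᴴ * Jmat * R₂ = Jmat := by
  ext i j
  fin_cases i <;> fin_cases j <;>
    simp [Matrix.mul_apply, Fin.sum_univ_three, Jmat, R₂, ω, Matrix.conjTranspose_apply,
      Matrix.vecHead, Matrix.vecTail] <;>
    ring_nf <;>
    simp [Complex.ext_iff, ← Complex.ofReal_pow, Real.sq_sqrt] <;>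
    ring_nf

lemma hR₃ : R₃ᴴ * Jmat * R₃ = Jmat := by
  ext i j
  fin_cases i <;> fin_cases j <;>
    simp [Matrix.mul_apply, Fin.sum_univ_three, Jmat, R₃, ω, Matrix.conjTranspose_apply,
      Matrix.vecHead, Matrix.vecTail] <;>
    ring_nf <;>
    simp [Complex.ext_iff, ← Complex.ofReal_pow, Real.sq_sqrt] <;>
    ring_nf <;>
    simp

lemma hT : Tᴴ * Jmat * T = Jmat := by
  ext i j
  fin_cases i <;> fin_cases j <;>
    simp [Matrix.mul_apply, Fin.sum_univ_three, Jmat, T, Matrix.conjTranspose_apply,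
      Matrix.vecHead, Matrix.vecTail]

def toGL (M : Matrix (Fin 3) (Fin 3) ℂ) (h : Mᴴ * Jmat * M = Jmat) : GL (Fin 3) ℂ where
  val := M
  inv := Jmat * Mᴴ * Jmat
  inv_val := by
    calc (Jmat * Mᴴ * Jmat) * M = Jmat * (Mᴴ * Jmat * M) := by
          simp only [Matrix.mul_assoc]
    _ = 1 := by rw [h, Jmat_mul_Jmat]
  val_inv := by
    apply mul_eq_one_comm.mp
    calc (Jmat * Mᴴ * Jmat) * M = Jmat * (Mᴴ * Jmat * M) := by
          simp only [Matrix.mul_assoc]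
    _ = 1 := by rw [h, Jmat_mul_Jmat]

lemma R₁_entries : EntriesIn R₁ := by
  intro i j
  fin_cases i <;> fin_cases j
  · exact ⟨1, 0, by norm_num [R₁]⟩
  · exact ⟨0, 0, by norm_num [R₁]⟩
  · exact ⟨0, 0, by norm_num [R₁]⟩
  · exact ⟨0, 0, by norm_num [R₁, Matrix.vecHead, Matrix.vecTail]⟩
  · exact ⟨-1, 0, by norm_num [R₁, Matrix.vecHead, Matrix.vecTail]⟩
  · exact ⟨0, 0, by norm_num [R₁, Matrix.vecHead, Matrix.vecTail]⟩
  · exact ⟨0, 0, by norm_num [R₁, Matrix.vecHead, Matrix.vecTail]⟩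
  · exact ⟨0, 0, by norm_num [R₁, Matrix.vecHead, Matrix.vecTail]⟩
  · exact ⟨1, 0, by norm_num [R₁, Matrix.vecHead, Matrix.vecTail]⟩

lemma R₁_fix : FixesQInf R₁ :=
  ⟨1, by
    funext i
    fin_cases i <;>
      simp [R₁, Matrix.mulVec, dotProduct, Fin.sum_univ_three,
        Matrix.vecHead, Matrix.vecTail]⟩

lemma R₂_entries : EntriesIn R₂ := by
  intro i j
  fin_cases i <;> fin_cases j
  · exact ⟨1, 0, by norm_num [R₂]⟩
  · exact ⟨1, 0, by norm_num [R₂]⟩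
  · exact ⟨-1, 1, by simp [R₂, hconjω]; push_cast; ring⟩
  · exact ⟨0, 0, by norm_num [R₂, Matrix.vecHead, Matrix.vecTail]⟩
  · exact ⟨-1, 0, by norm_num [R₂, Matrix.vecHead, Matrix.vecTail]⟩
  · exact ⟨1, 0, by norm_num [R₂, Matrix.vecHead, Matrix.vecTail]⟩
  · exact ⟨0, 0, by norm_num [R₂, Matrix.vecHead, Matrix.vecTail]⟩
  · exact ⟨0, 0, by norm_num [R₂, Matrix.vecHead, Matrix.vecTail]⟩
  · exact ⟨1, 0, by norm_num [R₂, Matrix.vecHead, Matrix.vecTail]⟩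

lemma R₃_entries : EntriesIn R₃ := by
  intro i j
  fin_cases i <;> fin_cases j
  · exact ⟨1, 0, by norm_num [R₃]⟩
  · exact ⟨1, -1, by simp [R₃, hconjω]; push_cast; ring⟩
  · exact ⟨-2, 1, by simp [R₃, hconjω]; push_cast; ring⟩
  · exact ⟨0, 0, by norm_num [R₃, Matrix.vecHead, Matrix.vecTail]⟩
  · exact ⟨-1, 0, by norm_num [R₃, Matrix.vecHead, Matrix.vecTail]⟩
  · exact ⟨0, 1, by norm_num [R₃, Matrix.vecHead, Matrix.vecTail]⟩
  · exact ⟨0, 0, by norm_num [R₃, Matrix.vecHead, Matrix.vecTail]⟩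
  · exact ⟨0, 0, by norm_num [R₃, Matrix.vecHead, Matrix.vecTail]⟩
  · exact ⟨1, 0, by norm_num [R₃, Matrix.vecHead, Matrix.vecTail]⟩

lemma T_entries : EntriesIn T := by
  intro i j
  fin_cases i <;> fin_cases j
  · exact ⟨1, 0, by norm_num [T]⟩
  · exact ⟨0, 0, by norm_num [T]⟩
  · exact ⟨-1, 2, by simp [T, ω]; push_cast; ring⟩
  · exact ⟨0, 0, by norm_num [T, Matrix.vecHead, Matrix.vecTail]⟩
  · exact ⟨1, 0, by norm_num [T, Matrix.vecHead, Matrix.vecTail]⟩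
  · exact ⟨0, 0, by norm_num [T, Matrix.vecHead, Matrix.vecTail]⟩
  · exact ⟨0, 0, by norm_num [T, Matrix.vecHead, Matrix.vecTail]⟩
  · exact ⟨0, 0, by norm_num [T, Matrix.vecHead, Matrix.vecTail]⟩
  · exact ⟨1, 0, by norm_num [T, Matrix.vecHead, Matrix.vecTail]⟩

lemma R₂_fix : FixesQInf R₂ :=
  ⟨1, by
    funext i
    fin_cases i <;>
      simp [R₂, Matrix.mulVec, dotProduct, Fin.sum_univ_three,
        Matrix.vecHead, Matrix.vecTail]⟩

lemma R₃_fix : FixesQInf R₃ :=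
  ⟨1, by
    funext i
    fin_cases i <;>
      simp [R₃, Matrix.mulVec, dotProduct, Fin.sum_univ_three,
        Matrix.vecHead, Matrix.vecTail]⟩

lemma T_fix : FixesQInf T :=
  ⟨1, by
    funext i
    fin_cases i <;>
      simp [T, Matrix.mulVec, dotProduct, Fin.sum_univ_three,
        Matrix.vecHead, Matrix.vecTail]⟩

/-- `R₁`, `R₂`, `R₃`, `T` as elements of the stabiliser of `q∞`. -/
def R₁s : stab := ⟨toGL R₁ hR₁, R₁_entries, hR₁, R₁_fix⟩
def R₂s : stab := ⟨toGL R₂ hR₂, R₂_entries, hR₂, R₂_fix⟩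
def R₃s : stab := ⟨toGL R₃ hR₃, R₃_entries, hR₃, R₃_fix⟩
def Ts : stab := ⟨toGL T hT, T_entries, hT, T_fix⟩

/-- The relator set `{r₁², [t,r₁], t r₂⁻², t r₃⁻², t (r₁r₃r₂)⁻²}` of the
presentation, in the free group on the four generators `r₁, r₂, r₃, t`
(indexed `0, 1, 2, 3`). -/
def rels : Set (FreeGroup (Fin 4)) :=
  {(FreeGroup.of 0)^2,
   FreeGroup.of 3 * FreeGroup.of 0 * (FreeGroup.of 3)⁻¹ * (FreeGroup.of 0)⁻¹,
   FreeGroup.of 3 * ((FreeGroup.of 1)^2)⁻¹,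
   FreeGroup.of 3 * ((FreeGroup.of 2)^2)⁻¹,
   FreeGroup.of 3 * ((FreeGroup.of 0 * FreeGroup.of 2 * FreeGroup.of 1)^2)⁻¹}


/-!
Up to the central element `-I`, every element of the stabiliser is an upper triangular matrix
`[[1, a, b], [0, e, d], [0, 0, 1]]` with `e = ±1`, `a ∈ O₁₁`, `d = -e·conj a` and
`b + conj b = -|a|²`. Multiplying by `R₁` makes `e = 1`; multiplying by a word in `X = R₁R₂` and
`Y = R₁R₃`, whose `a`-entries `1` and `1 - ω` span `O₁₁`, makes `a = 0`; what remains has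
`b + conj b = 0`, i.e. `b ∈ i√11 ℤ`, so it is a power of `T`. Hence the images of the generators
generate the stabiliser.

Conversely, the relators make `t` central and give `r₁xr₁ = x⁻¹t`, `r₁yr₁ = y⁻¹t` and `yx = xyt`
for `x = r₁r₂`, `y = r₁r₃`, so every element of the presented group is `r₁^ε x^m y^n t^k`. The
image of such a word has `(0,0)`-entry `1`, hence is never `-I`, and its entries `e = (-1)^ε`,
`a = m + n(1 - ω)` and (when `m = n = 0`) `b = k·i√11` show that it is `I` only for the trivial
word.
-/

section

variable {G : Type*} [Group G] {r x y t : G}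

structure HeisenbergReflection (r x y t : G) : Prop where
  r_mul_r : r * r = 1
  commute_r : Commute t r
  commute_x : Commute t x
  commute_y : Commute t y
  r_mul_x_mul_r : r * x * r = x⁻¹ * t
  r_mul_y_mul_r : r * y * r = y⁻¹ * t
  y_mul_x : y * x = x * y * t

theorem zpow_mul_of_mul_mul_eq_inv_mul {z : G} (hr : r * r = 1) (hz : Commute t z)
    (h : r * z * r = z⁻¹ * t) (m : ℤ) : z ^ m * r = r * z ^ (-m) * t ^ m := by
  have hconj := conj_zpow (a := r) (b := z) (i := m)
  rw [inv_eq_of_mul_eq_one_right hr, h, hz.symm.inv_left.mul_zpow, _root_.inv_zpow'] at hconj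
  rw [mul_assoc r, hconj, ← mul_assoc, ← mul_assoc, hr, one_mul]

theorem zpow_mul_of_mul_eq_mul_mul (hy : Commute t y) (h : y * x = x * y * t) (n : ℤ) :
    y ^ n * x = x * y ^ n * t ^ n := by
  have hsemi : SemiconjBy x (y * t) y := by rw [SemiconjBy, ← mul_assoc, h]
  rw [mul_assoc, ← hy.symm.mul_zpow, (hsemi.zpow_right n).eq]

theorem conj_mul_eq_inv_mul_of_sq {z : G} (hr : r * r = 1) (hrt : Commute t r)
    (hz : t = z ^ 2) : r * (r * z) * r = (r * z)⁻¹ * t := by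
  rw [_root_.mul_inv_rev, inv_eq_of_mul_eq_one_right hr, mul_assoc _ r, ← hrt.eq, hz,
    ← mul_assoc r, hr]
  group

namespace HeisenbergReflection

theorem word_mul_y (h : HeisenbergReflection r x y t) (s : G) (m n k : ℤ) :
    s * x ^ m * y ^ n * t ^ k * y = s * x ^ m * y ^ (n + 1) * t ^ k := by
  rw [mul_assoc _ (t ^ k), (h.commute_y.zpow_left k).eq]
  group

theorem word_mul_x (h : HeisenbergReflection r x y t) (s : G) (m n k : ℤ) :
    s * x ^ m * y ^ n * t ^ k * x = s * x ^ (m + 1) * y ^ n * t ^ (k + n) := by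
  rw [mul_assoc _ (t ^ k), (h.commute_x.zpow_left k).eq, ← mul_assoc, mul_assoc _ (y ^ n),
    zpow_mul_of_mul_eq_mul_mul h.commute_y h.y_mul_x]
  group

theorem word_mul_r (h : HeisenbergReflection r x y t) (s : G) (m n k : ℤ) :
    s * x ^ m * y ^ n * t ^ k * r = s * r * x ^ (-m) * y ^ (-n) * t ^ (m + n + k) := by
  rw [mul_assoc _ (t ^ k), (h.commute_r.zpow_left k).eq, ← mul_assoc, mul_assoc _ (y ^ n),
    zpow_mul_of_mul_mul_eq_inv_mul h.r_mul_r h.commute_y h.r_mul_y_mul_r]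
  simp only [← mul_assoc]
  rw [mul_assoc s, zpow_mul_of_mul_mul_eq_inv_mul h.r_mul_r h.commute_x h.r_mul_x_mul_r]
  simp only [← mul_assoc]
  rw [mul_assoc _ (t ^ m), (h.commute_y.zpow_zpow m (-n)).eq]
  group

theorem exists_word_of_mem_closure (h : HeisenbergReflection r x y t) {g : G}
    (hg : g ∈ Subgroup.closure {r, x, y, t}) :
    ∃ (s : G) (m n k : ℤ), (s = 1 ∨ s = r) ∧ g = s * x ^ m * y ^ n * t ^ k := by
  have hsr {s : G} (hs : s = 1 ∨ s = r) : s * r = 1 ∨ s * r = r := by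
    rcases hs with rfl | rfl
    exacts [Or.inr (one_mul r), Or.inl h.r_mul_r]
  induction hg using Subgroup.closure_induction_right with
  | one => exact ⟨1, 0, 0, 0, Or.inl rfl, by group⟩
  | mul_right g _ z hz ih =>
    obtain ⟨s, m, n, k, hs, rfl⟩ := ih
    rcases hz with rfl | rfl | rfl | rfl
    · exact ⟨s * z, -m, -n, m + n + k, hsr hs, h.word_mul_r s m n k⟩
    · exact ⟨s, m + 1, n, k + n, hs, h.word_mul_x s m n k⟩
    · exact ⟨s, m, n + 1, k, hs, h.word_mul_y s m n k⟩
    · exact ⟨s, m, n, k + 1, hs, by group⟩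
  | mul_inv_cancel g _ z hz ih =>
    obtain ⟨s, m, n, k, hs, rfl⟩ := ih
    rcases hz with rfl | rfl | rfl | rfl
    · rw [inv_eq_of_mul_eq_one_right h.r_mul_r]
      exact ⟨s * z, -m, -n, m + n + k, hsr hs, h.word_mul_r s m n k⟩
    · refine ⟨s, m - 1, n, k - n, hs, ?_⟩
      rw [mul_inv_eq_iff_eq_mul, h.word_mul_x, sub_add_cancel, sub_add_cancel]
    · refine ⟨s, m, n - 1, k, hs, ?_⟩
      rw [mul_inv_eq_iff_eq_mul, h.word_mul_y, sub_add_cancel]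
    · exact ⟨s, m, n, k - 1, hs, by group⟩

theorem of_relations {r₁ r₂ r₃ : G} (h₁ : r₁ ^ 2 = 1) (h₂ : t * r₁ = r₁ * t) (h₃ : t = r₂ ^ 2)
    (h₄ : t = r₃ ^ 2) (h₅ : t = (r₁ * r₃ * r₂) ^ 2) :
    HeisenbergReflection r₁ (r₁ * r₂) (r₁ * r₃) t := by
  have hr : r₁ * r₁ = 1 := by rw [← pow_two, h₁]
  have htx : Commute t (r₁ * r₂) := Commute.mul_right h₂ (h₃ ▸ Commute.pow_self r₂ 2)
  have hty : Commute t (r₁ * r₃) := Commute.mul_right h₂ (h₄ ▸ Commute.pow_self r₃ 2)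
  have key : r₃ * r₂ * r₁ * r₃ = r₁ * r₂ := by
    calc r₃ * r₂ * r₁ * r₃ = r₁⁻¹ * ((r₁ * r₃ * r₂) * (r₁ * r₃ * r₂)) * r₂⁻¹ := by group
    _ = r₁ * r₂ := by rw [← pow_two, ← h₅, inv_eq_of_mul_eq_one_right hr, h₃]; group
  refine ⟨hr, h₂, htx, hty, conj_mul_eq_inv_mul_of_sq hr h₂ h₃, conj_mul_eq_inv_mul_of_sq hr h₂ h₄,
    Eq.symm ?_⟩
  calc r₁ * r₂ * (r₁ * r₃) * t = r₁ * r₃⁻¹ * (r₃ * r₂ * r₁ * r₃) * t := by group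
  _ = r₁ * r₃⁻¹ * t * (r₁ * r₂) := by rw [key, mul_assoc _ (r₁ * r₂), ← htx.eq]; group
  _ = r₁ * r₃ * (r₁ * r₂) := by rw [h₄]; group

end HeisenbergReflection

end

theorem ω_re : ω.re = 1 / 2 := by simp [ω]

theorem ω_im : ω.im = √11 / 2 := by simp [ω]

theorem intCast_add_intCast_mul_ω_eq_zero {p q : ℤ} (h : (p : ℂ) + q * ω = 0) :
    p = 0 ∧ q = 0 := by
  have him : (q : ℝ) * (√11 / 2) = 0 := by simpa [ω_im] using congrArg Complex.im h
  have hq : q = 0 := by exact_mod_cast (mul_eq_zero.mp him).resolve_right (by positivity)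
  subst hq
  exact ⟨by simpa using h, rfl⟩

theorem normSq_intCast_add_intCast_mul_ω (p q : ℤ) :
    normSq (p + q * ω) = ((p ^ 2 + p * q + 3 * q ^ 2 : ℤ) : ℝ) := by
  have h11 : √11 ^ 2 = 11 := Real.sq_sqrt (by norm_num)
  simp only [normSq_apply, add_re, add_im, mul_re, mul_im, intCast_re, intCast_im, ω_re, ω_im]
  push_cast
  linear_combination (q ^ 2 / 4 : ℝ) * h11

theorem O11.eq_one_or_eq_neg_one {x y : ℂ} (hx : x ∈ O11) (hy : y ∈ O11)
    (h : starRingEnd ℂ y * x = 1) : x = 1 ∨ x = -1 := by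
  obtain ⟨p, q, rfl⟩ := hx
  obtain ⟨p', q', rfl⟩ := hy
  have hnorm : (p ^ 2 + p * q + 3 * q ^ 2) * (p' ^ 2 + p' * q' + 3 * q' ^ 2) = 1 := by
    have := congrArg normSq h
    rw [map_mul, normSq_conj, normSq_intCast_add_intCast_mul_ω,
      normSq_intCast_add_intCast_mul_ω, map_one] at this
    exact_mod_cast (mul_comm _ _).trans this
  have h1 : p ^ 2 + p * q + 3 * q ^ 2 = 1 :=
    Int.eq_one_of_mul_eq_one_right (by nlinarith [sq_nonneg (2 * p' + q')]) hnorm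
  have hq : q = 0 := by nlinarith [sq_nonneg (2 * p + q)]
  have hp : p = 1 ∨ p = -1 := by
    have : (p - 1) * (p + 1) = 0 := by subst hq; linear_combination h1
    rcases mul_eq_zero.mp this with h | h <;> omega
  subst hq
  rcases hp with rfl | rfl <;> simp

theorem O11.exists_eq_intCast_mul_of_add_conj_eq_zero {b : ℂ} (hb : b ∈ O11)
    (h : b + starRingEnd ℂ b = 0) : ∃ k : ℤ, b = k * (2 * ω - 1) := by
  obtain ⟨p, q, rfl⟩ := hb
  rw [map_add, map_mul, map_intCast, map_intCast, hconjω] at h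
  have hq : 2 * p + q = 0 := by
    have : ((2 * p + q : ℤ) : ℂ) = 0 := by push_cast; linear_combination h
    exact_mod_cast this
  exact ⟨-p, by rw [show q = -2 * p by omega]; push_cast; ring⟩

def upperTri (e a b d : ℂ) : Matrix (Fin 3) (Fin 3) ℂ := !![1, a, b; 0, e, d; 0, 0, 1]

theorem upperTri_mul (e a b d e' a' b' d' : ℂ) :
    upperTri e a b d * upperTri e' a' b' d' =
      upperTri (e * e') (a * e' + a') (b + a * d' + b') (e * d' + d) := by
  simp only [upperTri, Matrix.mul_fin_three]
  ring_nf

theorem upperTri_one : upperTri 1 0 0 0 = 1 := by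
  ext i j
  fin_cases i <;> fin_cases j <;> simp [upperTri]

theorem upperTri_inj {e a b d e' a' b' d' : ℂ} :
    upperTri e a b d = upperTri e' a' b' d' ↔ e = e' ∧ a = a' ∧ b = b' ∧ d = d' := by
  refine ⟨fun h ↦ ?_, by rintro ⟨rfl, rfl, rfl, rfl⟩; rfl⟩
  have entry (i j : Fin 3) := congrFun (congrFun h i) j
  exact ⟨by simpa [upperTri] using entry 1 1, by simpa [upperTri] using entry 0 1,
    by simpa [upperTri] using entry 0 2, by simpa [upperTri] using entry 1 2⟩

theorem upperTri_inv_mul (a b d : ℂ) :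
    upperTri 1 (-a) (a * d - b) (-d) * upperTri 1 a b d = 1 := by
  rw [upperTri_mul, ← upperTri_one, upperTri_inj]
  refine ⟨?_, ?_, ?_, ?_⟩ <;> ring

theorem IsU.apply {M : Matrix (Fin 3) (Fin 3) ℂ} (hM : IsU M) (i j : Fin 3) :
    starRingEnd ℂ (M 0 i) * M 2 j + starRingEnd ℂ (M 1 i) * M 1 j
      + starRingEnd ℂ (M 2 i) * M 0 j = Jmat i j := by
  rw [← hM]
  simp only [Jmat, Matrix.mul_apply, conjTranspose_apply, RCLike.star_def, of_apply, cons_val',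
    cons_val_fin_one, Fin.sum_univ_three, cons_val_zero, cons_val_one, cons_val, mul_zero, add_zero,
    mul_one, zero_add]
  ring

theorem IsU.upperTri {e a b d : ℂ} (h : IsU (upperTri e a b d)) :
    starRingEnd ℂ e * e = 1 ∧ starRingEnd ℂ d * e + a = 0 ∧
      b + starRingEnd ℂ b + starRingEnd ℂ d * d = 0 := by
  refine ⟨?_, ?_, ?_⟩
  · simpa [_root_.upperTri, Jmat] using h.apply 1 1
  · simpa [_root_.upperTri, Jmat] using h.apply 2 1
  · have := h.apply 2 2
    simp only [_root_.upperTri, of_apply, cons_val', cons_val, cons_val_fin_one, cons_val_zero,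
      cons_val_one, mul_one, map_one, one_mul, Jmat] at this
    linear_combination this

def mat : stab →* Matrix (Fin 3) (Fin 3) ℂ := (Units.coeHom _).comp stab.subtype

theorem mat_injective : Function.Injective mat :=
  fun _ _ h ↦ Subtype.ext (Units.ext h)

theorem mat_mem_O11 (g : stab) (i j : Fin 3) : mat g i j ∈ O11 := g.2.1 i j

theorem isU_mat (g : stab) : IsU (mat g) := g.2.2.1

theorem fixesQInf_mat (g : stab) : FixesQInf (mat g) := g.2.2.2

theorem mat_negOne : mat negOne = -1 := rfl

theorem mat_inv_of_eq_upperTri {g : stab} {a b d : ℂ} (hg : mat g = upperTri 1 a b d) :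
    mat g⁻¹ = upperTri 1 (-a) (a * d - b) (-d) :=
  (left_inv_eq_right_inv (upperTri_inv_mul a b d)
    (by rw [← hg, ← map_mul, mul_inv_cancel, map_one])).symm

theorem mat_zpow_of_eq_upperTri {g : stab} {a b d : ℂ} (hg : mat g = upperTri 1 a b d) (m : ℤ) :
    mat (g ^ m) = upperTri 1 (m * a) (m * b + m * (m - 1) / 2 * (a * d)) (m * d) := by
  induction m using Int.induction_on with
  | zero => simp [← upperTri_one]
  | succ n ih =>
    rw [_root_.zpow_add_one, map_mul, ih, hg, upperTri_mul, upperTri_inj]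
    push_cast
    refine ⟨?_, ?_, ?_, ?_⟩ <;> ring
  | pred n ih =>
    rw [_root_.zpow_sub_one, map_mul, ih, mat_inv_of_eq_upperTri hg, upperTri_mul, upperTri_inj]
    push_cast
    refine ⟨?_, ?_, ?_, ?_⟩ <;> ring

theorem mat_col_zero (g : stab) : mat g 1 0 = 0 ∧ mat g 2 0 = 0 := by
  obtain ⟨c, hc⟩ := fixesQInf_mat g
  have entry (i : Fin 3) := congrFun hc i
  exact ⟨by simpa [Matrix.mulVec, dotProduct, Fin.sum_univ_three] using entry 1,
    by simpa [Matrix.mulVec, dotProduct, Fin.sum_univ_three] using entry 2⟩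

theorem conj_mat_two_two_mul (g : stab) : starRingEnd ℂ (mat g 2 2) * mat g 0 0 = 1 := by
  simpa [(mat_col_zero g).1, (mat_col_zero g).2, Jmat] using (isU_mat g).apply 2 0

theorem mat_zero_zero (g : stab) : mat g 0 0 = 1 ∨ mat g 0 0 = -1 :=
  O11.eq_one_or_eq_neg_one (mat_mem_O11 g 0 0) (mat_mem_O11 g 2 2) (conj_mat_two_two_mul g)

theorem mat_eq_upperTri (g : stab) (h00 : mat g 0 0 = 1) :
    mat g = upperTri (mat g 1 1) (mat g 0 1) (mat g 0 2) (mat g 1 2) := by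
  obtain ⟨h10, h20⟩ := mat_col_zero g
  have h22 : mat g 2 2 = 1 := by
    simpa [h00] using congrArg (starRingEnd ℂ) (conj_mat_two_two_mul g)
  have h21 : mat g 2 1 = 0 := by
    simpa [h10, h20, h00, Jmat] using (isU_mat g).apply 1 0
  ext i j
  fin_cases i <;> fin_cases j <;> simp [upperTri, h00, h10, h20, h21, h22]

theorem mat_R₁s : mat R₁s = upperTri (-1) 0 0 0 := rfl

theorem mat_R₂s : mat R₂s = upperTri (-1) 1 (ω - 1) 1 := by
  change R₂ = _
  simp only [R₂, upperTri, hconjω]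
  ring_nf

theorem mat_R₃s : mat R₃s = upperTri (-1) (1 - ω) (ω - 2) ω := by
  change R₃ = _
  simp only [R₃, upperTri, hconjω]
  ring_nf

theorem mat_Ts : mat Ts = upperTri 1 0 (2 * ω - 1) 0 := by
  change T = _
  simp only [T, upperTri, ω]
  ring_nf

theorem stab_relations :
    R₁s ^ 2 = 1 ∧ Ts * R₁s = R₁s * Ts ∧ Ts = R₂s ^ 2 ∧ Ts = R₃s ^ 2 ∧
      Ts = (R₁s * R₃s * R₂s) ^ 2 := by
  simp only [← mat_injective.eq_iff, map_mul, map_one, pow_two, mat_R₁s, mat_R₂s,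
    mat_R₃s, mat_Ts, upperTri_mul, ← upperTri_one, upperTri_inj]
  refine ⟨?_, ?_, ?_, ?_, ?_⟩ <;> refine ⟨?_, ?_, ?_, ?_⟩ <;>
    first | ring1 | linear_combination hω

def stabGens : Fin 4 → stab := ![R₁s, R₂s, R₃s, Ts]

theorem forall_lift_rels_eq_one_iff {G : Type*} [Group G] (f : Fin 4 → G) :
    (∀ r ∈ rels, FreeGroup.lift f r = 1) ↔ f 0 ^ 2 = 1 ∧ f 3 * f 0 = f 0 * f 3 ∧
      f 3 = f 1 ^ 2 ∧ f 3 = f 2 ^ 2 ∧ f 3 = (f 0 * f 2 * f 1) ^ 2 := by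
  simp only [rels, Set.mem_insert_iff, Set.mem_singleton_iff, forall_eq_or_imp, forall_eq,
    map_mul, map_inv, map_pow, FreeGroup.lift_apply_of, mul_inv_eq_iff_eq_mul, one_mul]

theorem stabGens_rels : ∀ r ∈ rels, FreeGroup.lift stabGens r = 1 :=
  (forall_lift_rels_eq_one_iff stabGens).mpr stab_relations

def toStab : PresentedGroup rels →* stab := PresentedGroup.toGroup stabGens_rels

theorem toStab_of_zero : toStab (.of 0) = R₁s := PresentedGroup.toGroup.of _

theorem toStab_of_one : toStab (.of 1) = R₂s := PresentedGroup.toGroup.of _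

theorem toStab_of_two : toStab (.of 2) = R₃s := PresentedGroup.toGroup.of _

theorem toStab_of_three : toStab (.of 3) = Ts := PresentedGroup.toGroup.of _

theorem heisenbergReflection_presentedGroup :
    HeisenbergReflection (.of 0 : PresentedGroup rels) (.of 0 * .of 1) (.of 0 * .of 2) (.of 3) := by
  have hlift : FreeGroup.lift PresentedGroup.of = PresentedGroup.mk rels :=
    FreeGroup.ext_hom _ _ fun _ ↦ FreeGroup.lift_apply_of
  obtain ⟨h₁, h₂, h₃, h₄, h₅⟩ := (forall_lift_rels_eq_one_iff PresentedGroup.of).mp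
    fun r hr ↦ hlift ▸ PresentedGroup.one_of_mem hr
  exact .of_relations h₁ h₂ h₃ h₄ h₅

theorem closure_presentedGroup :
    Subgroup.closure {.of 0, .of 0 * .of 1, .of 0 * .of 2, .of 3} =
      (⊤ : Subgroup (PresentedGroup rels)) := by
  set H := Subgroup.closure {.of 0, .of 0 * .of 1, .of 0 * .of 2, (.of 3 : PresentedGroup rels)}
  have h0 : .of 0 ∈ H := Subgroup.subset_closure (by simp)
  have hr_mul (i : Fin 4) (hi : .of 0 * .of i ∈ H) : .of i ∈ H := by
    simpa [← mul_assoc, heisenbergReflection_presentedGroup.r_mul_r] using mul_mem h0 hi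
  refine eq_top_iff.mpr fun p _ ↦ PresentedGroup.generated_by _ _ (fun i ↦ ?_) p
  fin_cases i
  exacts [h0, hr_mul 1 (Subgroup.subset_closure (by simp)),
    hr_mul 2 (Subgroup.subset_closure (by simp)), Subgroup.subset_closure (by simp)]

theorem exists_presentedGroup_word (p : PresentedGroup rels) :
    ∃ (s : PresentedGroup rels) (m n k : ℤ), (s = 1 ∨ s = .of 0) ∧
      p = s * (.of 0 * .of 1) ^ m * (.of 0 * .of 2) ^ n * .of 3 ^ k :=
  heisenbergReflection_presentedGroup.exists_word_of_mem_closure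
    (closure_presentedGroup ▸ Subgroup.mem_top p)

theorem mat_R₁s_mul_R₂s : mat (R₁s * R₂s) = upperTri 1 1 (ω - 1) (-1) := by
  rw [map_mul, mat_R₁s, mat_R₂s, upperTri_mul, upperTri_inj]
  refine ⟨?_, ?_, ?_, ?_⟩ <;> ring

theorem mat_R₁s_mul_R₃s : mat (R₁s * R₃s) = upperTri 1 (1 - ω) (ω - 2) (-ω) := by
  rw [map_mul, mat_R₁s, mat_R₃s, upperTri_mul, upperTri_inj]
  refine ⟨?_, ?_, ?_, ?_⟩ <;> ring

theorem mem_zpowers_negOne {g : stab} (hg : g ∈ Subgroup.zpowers negOne) :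
    g = 1 ∨ g = negOne := by
  have hsq : negOne ^ (2 : ℤ) = 1 := mat_injective (by simp [mat_negOne])
  obtain ⟨k, rfl⟩ := hg
  obtain ⟨j, rfl | rfl⟩ := Int.even_or_odd' k
  · simp [_root_.zpow_mul, hsq]
  · simp [_root_.zpow_add, _root_.zpow_mul, hsq]

theorem eq_one_of_toStab_mem_zpowers {p : PresentedGroup rels}
    (hp : toStab p ∈ Subgroup.zpowers negOne) : p = 1 := by
  obtain ⟨s, m, n, k, hs, rfl⟩ := exists_presentedGroup_word p
  obtain ⟨e, hse, he⟩ : ∃ e : ℂ, mat (toStab s) = upperTri e 0 0 0 ∧ (e = 1 → s = 1) := by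
    rcases hs with rfl | rfl
    · exact ⟨1, by rw [map_one, map_one, upperTri_one], fun _ ↦ rfl⟩
    · exact ⟨-1, by rw [toStab_of_zero, mat_R₁s], fun h ↦ by norm_num at h⟩
  simp only [map_mul toStab, map_zpow toStab, toStab_of_zero, toStab_of_one, toStab_of_two,
    toStab_of_three] at hp
  rcases mem_zpowers_negOne hp with h | h <;> have hmat := congrArg mat h <;>
    simp only [map_mul, mat_zpow_of_eq_upperTri mat_R₁s_mul_R₂s,
      mat_zpow_of_eq_upperTri mat_R₁s_mul_R₃s, mat_zpow_of_eq_upperTri mat_Ts, hse, upperTri_mul]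
      at hmat
  · rw [map_one, ← upperTri_one, upperTri_inj] at hmat
    obtain ⟨he1, ha, hb, -⟩ := hmat
    obtain ⟨hmn, hn⟩ := intCast_add_intCast_mul_ω_eq_zero (p := m + n) (q := -n)
      (by push_cast; linear_combination ha)
    obtain rfl : n = 0 := by omega
    obtain rfl : m = 0 := by omega
    obtain ⟨hk, -⟩ := intCast_add_intCast_mul_ω_eq_zero (p := -k) (q := 2 * k)
      (by push_cast; linear_combination hb)
    obtain rfl : k = 0 := by omega
    simp [he (by simpa using he1)]
  · have := congrFun (congrFun hmat 0) 0
    norm_num [mat_negOne, upperTri] at this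

theorem eq_Ts_zpow_of_mat_eq_upperTri {g : stab} {b d : ℂ} (hg : mat g = upperTri 1 0 b d) :
    ∃ k : ℤ, g = Ts ^ k := by
  obtain ⟨-, hd, hb⟩ := (hg ▸ isU_mat g).upperTri
  have hd : d = 0 := by simpa using hd
  have hbO : b ∈ O11 := by simpa [hg, upperTri] using mat_mem_O11 g 0 2
  obtain ⟨k, hk⟩ := O11.exists_eq_intCast_mul_of_add_conj_eq_zero hbO (by simpa [hd] using hb)
  refine ⟨k, mat_injective ?_⟩
  rw [hg, mat_zpow_of_eq_upperTri mat_Ts, upperTri_inj]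
  simp [hk, hd]

theorem mem_range_of_mat_eq_upperTri_one {g : stab} {a b d : ℂ} (hg : mat g = upperTri 1 a b d) :
    g ∈ toStab.range := by
  obtain ⟨p, q, rfl⟩ : a ∈ O11 := by simpa [hg, upperTri] using mat_mem_O11 g 0 1
  have hX : R₁s * R₂s ∈ toStab.range := ⟨.of 0 * .of 1, by simp [toStab_of_zero, toStab_of_one]⟩
  have hY : R₁s * R₃s ∈ toStab.range := ⟨.of 0 * .of 2, by simp [toStab_of_zero, toStab_of_two]⟩
  have hT : Ts ∈ toStab.range := ⟨.of 3, toStab_of_three⟩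
  set z := (R₁s * R₂s) ^ (p + q) * (R₁s * R₃s) ^ (-q)
  have hzmat := map_mul mat ((R₁s * R₂s) ^ (p + q)) ((R₁s * R₃s) ^ (-q))
  rw [mat_zpow_of_eq_upperTri mat_R₁s_mul_R₂s, mat_zpow_of_eq_upperTri mat_R₁s_mul_R₃s,
    upperTri_mul, mul_one] at hzmat
  obtain ⟨k, hk⟩ := eq_Ts_zpow_of_mat_eq_upperTri (g := z⁻¹ * g) (by
    rw [map_mul, mat_inv_of_eq_upperTri hzmat, hg, upperTri_mul, upperTri_inj]
    push_cast
    exact ⟨by ring, by ring, rfl, rfl⟩)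
  rw [inv_mul_eq_iff_eq_mul.mp hk]
  exact mul_mem (mul_mem (zpow_mem hX _) (zpow_mem hY _)) (zpow_mem hT k)

theorem mem_range_of_mat_eq_upperTri {g : stab} {e a b d : ℂ} (hg : mat g = upperTri e a b d) :
    g ∈ toStab.range := by
  have he : e ∈ O11 := by simpa [hg, upperTri] using mat_mem_O11 g 1 1
  rcases O11.eq_one_or_eq_neg_one he he (hg ▸ isU_mat g).upperTri.1 with rfl | rfl
  · exact mem_range_of_mat_eq_upperTri_one hg
  · have hr : R₁s ∈ toStab.range := ⟨.of 0, toStab_of_zero⟩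
    rw [← inv_mul_cancel_left R₁s g]
    refine mul_mem (inv_mem hr) (mem_range_of_mat_eq_upperTri_one (a := a) (b := b) (d := -d) ?_)
    rw [map_mul, mat_R₁s, hg, upperTri_mul, upperTri_inj]
    exact ⟨by ring, by ring, by ring, by ring⟩

theorem mem_range_or_negOne_mul_mem_range (g : stab) :
    g ∈ toStab.range ∨ negOne * g ∈ toStab.range := by
  rcases mat_zero_zero g with h | h
  · exact .inl (mem_range_of_mat_eq_upperTri (mat_eq_upperTri g h))
  · refine .inr (mem_range_of_mat_eq_upperTri (mat_eq_upperTri _ ?_))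
    simp [map_mul, mat_negOne, h]

/-- **Presentation of the stabiliser** (Proposition 3.4 of the paper):
`(Γ₁₁)∞ = ⟨ R₁, R₂, R₃, T | R₁² = [T,R₁] = T R₂⁻² = T R₃⁻² = T (R₁R₃R₂)⁻² = id ⟩`, where `(Γ₁₁)∞` is the
stabiliser of `q∞` in `PU(2,1;O₁₁)`, i.e. the quotient of `stab` by `{±1}`. -/
theorem stabiliser_presentation :
    ∃ φ : PresentedGroup rels ≃* (stab ⧸ Subgroup.zpowers negOne),
      φ (PresentedGroup.of 0) = QuotientGroup.mk R₁s ∧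
      φ (PresentedGroup.of 1) = QuotientGroup.mk R₂s ∧
      φ (PresentedGroup.of 2) = QuotientGroup.mk R₃s ∧
      φ (PresentedGroup.of 3) = QuotientGroup.mk Ts := by
  set φ := (QuotientGroup.mk' (Subgroup.zpowers negOne)).comp toStab
  have hinj : Function.Injective φ := (injective_iff_map_eq_one φ).mpr fun p hp ↦
    eq_one_of_toStab_mem_zpowers ((QuotientGroup.eq_one_iff _).mp hp)
  have hsurj : Function.Surjective φ := by
    rintro ⟨g⟩
    rcases mem_range_or_negOne_mul_mem_range g with ⟨p, hp⟩ | ⟨p, hp⟩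
    · exact ⟨p, by rw [MonoidHom.comp_apply, hp]; rfl⟩
    · refine ⟨p, ?_⟩
      rw [MonoidHom.comp_apply, hp, QuotientGroup.mk'_apply, QuotientGroup.mk_mul,
        (QuotientGroup.eq_one_iff negOne).mpr (Subgroup.mem_zpowers _), one_mul]
      rfl
  exact ⟨.ofBijective φ ⟨hinj, hsurj⟩, congrArg _ toStab_of_zero, congrArg _ toStab_of_one,
    congrArg _ toStab_of_two, congrArg _ toStab_of_three⟩

end
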